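/- Let n ≥ 1 and let σ denote the uniform probability measure on the unit sphere S^{n−1} = {θ ∈ ℝⁿ : ‖θ‖ = 1} (normalized rotation-invariant surface measure). Let Σ be a symmetric positive definite n×n real matrix and Σ_f a symmetric positive semidefinite n×n real matrix. If ∫_{S^{n−1}} sqrt((θᵀ Σ_f θ)/(θᵀ Σ θ)) θ θᵀ σ(dθ) = (1/n) I_n (as an identity of n×n matrices, entrywise integrals), then Σ = Σ_f. -/

import Mathlib

open MeasureTheory Metric

/-- The uniform (normalized rotation-invariant) probability measure on the unit sphere
`S^{n-1} ⊆ ℝⁿ`. -/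
noncomputable def sphereUniform (n : ℕ) :
    Measure (sphere (0 : EuclideanSpace ℝ (Fin n)) 1) :=
  ((volume : Measure (EuclideanSpace ℝ (Fin n))).toSphere Set.univ)⁻¹ •
    (volume : Measure (EuclideanSpace ℝ (Fin n))).toSphere

/-- The quadratic form `θᵀ A θ` for a direction `θ` on the unit sphere. -/
noncomputable def squad {n : ℕ} (A : Matrix (Fin n) (Fin n) ℝ)
    (θ : sphere (0 : EuclideanSpace ℝ (Fin n)) 1) : ℝ :=
  ∑ i, ∑ j, (θ : EuclideanSpace ℝ (Fin n)) i * A i j * (θ : EuclideanSpace ℝ (Fin n)) j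

/-! Write `f θ = √(θᵀ Σ_f θ / θᵀ Σ θ)`. Reflections and coordinate swaps preserve `σ`, so
`∫ θ θᵀ dσ = I / n` as well; the hypothesis therefore says `∫ (1 - f) θ θᵀ dσ = 0`, and pairing
with `Σ - Σ_f` gives `∫ (1 - f θ) (θᵀ Σ θ - θᵀ Σ_f θ) dσ = 0`. Both factors of this integrand have
the sign of `θᵀ Σ θ - θᵀ Σ_f θ`, so it is a continuous nonnegative function; as `σ` charges every
nonempty open set, it vanishes identically. Hence `Σ` and `Σ_f` have the same quadratic form on the
sphere, and, being symmetric, are equal. -/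

open scoped Pointwise Matrix

local notation "𝔼" n:max => EuclideanSpace ℝ (Fin n)
local notation "𝕊" n:max => sphere (0 : EuclideanSpace ℝ (Fin n)) 1

theorem LinearEquiv.smul_preimage {R M N : Type*} [Semiring R] [AddCommMonoid M] [AddCommMonoid N]
    [Module R M] [Module R N] (T : M ≃ₗ[R] N) (A : Set R) (X : Set N) :
    A • T ⁻¹' X = T ⁻¹' (A • X) := by
  ext x
  simp only [Set.mem_smul, Set.mem_preimage]
  constructor
  · rintro ⟨r, hr, y, hy, rfl⟩
    exact ⟨r, hr, T y, hy, (T.map_smul r y).symm⟩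
  · rintro ⟨r, hr, y, hy, hx⟩
    exact ⟨r, hr, T.symm y, by simpa using hy, by rw [← T.symm.map_smul, hx, T.symm_apply_apply]⟩

namespace LinearIsometryEquiv

variable {E : Type*} [NormedAddCommGroup E] [NormedSpace ℝ E]

def unitSphereHomeomorph (T : E ≃ₗᵢ[ℝ] E) : sphere (0 : E) 1 ≃ₜ sphere (0 : E) 1 :=
  T.toHomeomorph.sets (by ext; simp)

@[simp]
lemma coe_unitSphereHomeomorph_apply (T : E ≃ₗᵢ[ℝ] E) (θ : sphere (0 : E) 1) :
    (T.unitSphereHomeomorph θ : E) = T θ :=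
  rfl

lemma map_unitSphereHomeomorph_toSphere [MeasurableSpace E] [BorelSpace E] {μ : Measure E}
    (T : E ≃ₗᵢ[ℝ] E) (hT : MeasurePreserving T μ μ) :
    μ.toSphere.map T.unitSphereHomeomorph = μ.toSphere := by
  ext s hs
  have hpre : MeasurableSet (T.unitSphereHomeomorph ⁻¹' s) :=
    T.unitSphereHomeomorph.continuous.measurable hs
  have himage : ((↑) '' (T.unitSphereHomeomorph ⁻¹' s) : Set E) = T ⁻¹' ((↑) '' s) := by
    ext x
    simp [unitSphereHomeomorph]
    rfl
  rw [Measure.map_apply T.unitSphereHomeomorph.continuous.measurable hs,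
    Measure.toSphere_apply' _ hs, Measure.toSphere_apply' _ hpre, himage,
    ← T.coe_toLinearEquiv, T.toLinearEquiv.smul_preimage, T.coe_toLinearEquiv,
    hT.measure_preimage_emb T.toHomeomorph.measurableEmbedding]

end LinearIsometryEquiv

lemma Continuous.integrable_of_compactSpace {X : Type*} [TopologicalSpace X] [CompactSpace X]
    [MeasurableSpace X] [OpensMeasurableSpace X] {μ : Measure X} [IsFiniteMeasure μ] {g : X → ℝ}
    (hg : Continuous g) : Integrable g μ :=
  hg.integrable_of_hasCompactSupport (.of_compactSpace g)

section SphereUniform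

variable {n : ℕ}

instance : (sphereUniform n).IsOpenPosMeasure :=
  Measure.isOpenPosMeasure_smul _ (ENNReal.inv_ne_zero.2 (measure_ne_top _ _))

instance [NeZero n] : IsProbabilityMeasure (sphereUniform n) := by
  have : NeZero (volume : Measure (𝔼 n)).toSphere := ⟨Measure.toSphere_ne_zero _⟩
  unfold sphereUniform
  infer_instance

lemma measurePreserving_unitSphereHomeomorph_sphereUniform (T : 𝔼 n ≃ₗᵢ[ℝ] 𝔼 n) :
    MeasurePreserving T.unitSphereHomeomorph (sphereUniform n) (sphereUniform n) :=
  ⟨T.unitSphereHomeomorph.continuous.measurable, by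
    rw [sphereUniform, Measure.map_smul, T.map_unitSphereHomeomorph_toSphere T.measurePreserving]⟩

lemma integral_comp_unitSphereHomeomorph_sphereUniform (T : 𝔼 n ≃ₗᵢ[ℝ] 𝔼 n) (g : 𝕊 n → ℝ) :
    ∫ θ, g (T.unitSphereHomeomorph θ) ∂sphereUniform n = ∫ θ, g θ ∂sphereUniform n :=
  (measurePreserving_unitSphereHomeomorph_sphereUniform T).integral_comp'
    (f := T.unitSphereHomeomorph.toMeasurableEquiv) g

lemma integral_coord_mul_coord_sphereUniform_of_ne {i j : Fin n} (hij : i ≠ j) :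
    ∫ θ : 𝕊 n, θ.1 i * θ.1 j ∂sphereUniform n = 0 := by
  let T : 𝔼 n ≃ₗᵢ[ℝ] 𝔼 n :=
    LinearIsometryEquiv.piLpCongrRight 2 fun m => if m = i then .neg ℝ else .refl ℝ ℝ
  have hflip := integral_comp_unitSphereHomeomorph_sphereUniform T fun θ => θ.1 i * θ.1 j
  simp [T, hij.symm, integral_neg] at hflip
  linarith

lemma integral_coord_mul_self_sphereUniform_eq (k l : Fin n) :
    ∫ θ : 𝕊 n, θ.1 k * θ.1 k ∂sphereUniform n = ∫ θ : 𝕊 n, θ.1 l * θ.1 l ∂sphereUniform n := by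
  let T : 𝔼 n ≃ₗᵢ[ℝ] 𝔼 n := LinearIsometryEquiv.piLpCongrLeft 2 ℝ ℝ (Equiv.swap k l)
  have hswap := integral_comp_unitSphereHomeomorph_sphereUniform T fun θ => θ.1 l * θ.1 l
  simpa [T, Equiv.piCongrLeft'_apply] using hswap

lemma integral_coord_mul_self_sphereUniform (i : Fin n) :
    ∫ θ : 𝕊 n, θ.1 i * θ.1 i ∂sphereUniform n = 1 / n := by
  have : NeZero n := ⟨(Fin.pos i).ne'⟩
  have hsum : ∑ k, ∫ θ : 𝕊 n, θ.1 k * θ.1 k ∂sphereUniform n = 1 := by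
    rw [← integral_finsetSum _ fun k _ => Continuous.integrable_of_compactSpace (by fun_prop)]
    have hθ (θ : 𝕊 n) : ∑ k, θ.1 k * θ.1 k = 1 := by
      simpa [EuclideanSpace.sphere_zero_eq, sq] using θ.2
    simp [hθ]
  simp only [integral_coord_mul_self_sphereUniform_eq _ i, Finset.sum_const, Finset.card_univ,
    Fintype.card_fin, nsmul_eq_mul] at hsum
  rw [eq_div_iff (NeZero.ne _), mul_comm, hsum]

lemma integral_coord_mul_coord_sphereUniform (i j : Fin n) :
    ∫ θ : 𝕊 n, θ.1 i * θ.1 j ∂sphereUniform n = 1 / n * if i = j then 1 else 0 := by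
  rcases eq_or_ne i j with rfl | hij
  · simp [integral_coord_mul_self_sphereUniform]
  · simp [integral_coord_mul_coord_sphereUniform_of_ne hij, hij]

end SphereUniform

section QuadraticForm

variable {n : ℕ}

@[fun_prop]
lemma continuous_squad (A : Matrix (Fin n) (Fin n) ℝ) : Continuous (squad A) := by
  unfold squad
  fun_prop

lemma squad_sub (A B : Matrix (Fin n) (Fin n) ℝ) (θ : 𝕊 n) :
    squad (A - B) θ = squad A θ - squad B θ := by
  simp only [squad, Matrix.sub_apply, mul_sub, sub_mul, Finset.sum_sub_distrib]

lemma squad_eq_dotProduct (A : Matrix (Fin n) (Fin n) ℝ) (θ : 𝕊 n) :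
    squad A θ = θ.1.ofLp ⬝ᵥ A *ᵥ θ.1.ofLp := by
  simp [squad, dotProduct, Matrix.mulVec, Finset.mul_sum, mul_assoc]

lemma squad_eq_inner (A : Matrix (Fin n) (Fin n) ℝ) (θ : 𝕊 n) :
    squad A θ = inner ℝ (A.toEuclideanLin θ) θ.1 := by
  simp [squad_eq_dotProduct, PiLp.inner_apply, dotProduct, mul_comm]

lemma Matrix.PosDef.squad_pos {A : Matrix (Fin n) (Fin n) ℝ} (hA : A.PosDef) (θ : 𝕊 n) :
    0 < squad A θ := by
  rw [squad_eq_dotProduct]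
  exact hA.dotProduct_mulVec_pos (by simpa using ne_zero_of_mem_unit_sphere θ)

lemma Matrix.IsHermitian.eq_zero_of_squad_eq_zero {A : Matrix (Fin n) (Fin n) ℝ}
    (hA : A.IsHermitian) (h : ∀ θ, squad A θ = 0) : A = 0 := by
  refine Matrix.toEuclideanLin.map_eq_zero_iff.1
    ((Matrix.isSymmetric_toEuclideanLin_iff.2 hA).inner_map_self_eq_zero.1 fun x => ?_)
  rcases eq_or_ne x 0 with rfl | hx
  · simp
  let θ : 𝕊 n := ⟨‖x‖⁻¹ • x, by simp [norm_smul, hx]⟩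
  have hxθ : x = ‖x‖ • θ.1 := by simp [θ, smul_smul, hx]
  rw [hxθ, map_smul, inner_smul_left, inner_smul_right, ← squad_eq_inner, h, mul_zero, mul_zero]

lemma integral_mul_squad {μ : Measure (𝕊 n)} [IsFiniteMeasure μ] {w : 𝕊 n → ℝ}
    (hw : Continuous w) (A : Matrix (Fin n) (Fin n) ℝ) :
    ∫ θ, w θ * squad A θ ∂μ = ∑ i, ∑ j, A i j * ∫ θ, w θ * (θ.1 i * θ.1 j) ∂μ := by
  simp only [squad, Finset.mul_sum]
  rw [integral_finsetSum _ fun i _ => Continuous.integrable_of_compactSpace (by fun_prop)]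
  refine Finset.sum_congr rfl fun i _ => ?_
  rw [integral_finsetSum _ fun j _ => Continuous.integrable_of_compactSpace (by fun_prop)]
  refine Finset.sum_congr rfl fun j _ => ?_
  rw [← integral_const_mul]
  congr 1 with θ
  ring

end QuadraticForm

lemma one_sub_sqrt_div_mul_sub_nonneg {u v : ℝ} (hu : 0 < u) : 0 ≤ (1 - √(v / u)) * (u - v) := by
  rcases le_total v u with hvu | huv
  · refine mul_nonneg (sub_nonneg.2 (Real.sqrt_le_one.2 ?_)) (sub_nonneg.2 hvu)
    exact div_le_one_of_le₀ hvu hu.le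
  · refine mul_nonneg_of_nonpos_of_nonpos (sub_nonpos.2 (Real.one_le_sqrt.2 ?_)) (sub_nonpos.2 huv)
    exact (one_le_div hu).2 huv

lemma eq_of_one_sub_sqrt_div_mul_sub_eq_zero {u v : ℝ} (hu : 0 < u)
    (h : (1 - √(v / u)) * (u - v) = 0) : u = v := by
  rcases mul_eq_zero.1 h with h | h
  · rw [sub_eq_zero, eq_comm, Real.sqrt_eq_one, div_eq_one_iff_eq hu.ne'] at h
    exact h.symm
  · exact sub_eq_zero.1 h

/-- If `∫_{S^{n-1}} √(θᵀ Σ_f θ / θᵀ Σ θ) θθᵀ dσ(θ) = (1/n) I` (entrywise), with `Σ` symmetric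
positive definite and `Σ_f` symmetric positive semidefinite, then `Σ = Σ_f`. -/
theorem sliced_fixed_point_implies_equal
    (n : ℕ) (hn : 1 ≤ n)
    (S Sf : Matrix (Fin n) (Fin n) ℝ)
    (hS : S.PosDef) (hSf : Sf.PosSemidef)
    (h : ∀ i j : Fin n,
      (∫ θ : sphere (0 : EuclideanSpace ℝ (Fin n)) 1,
          Real.sqrt (squad Sf θ / squad S θ) *
            ((θ : EuclideanSpace ℝ (Fin n)) i * (θ : EuclideanSpace ℝ (Fin n)) j)
          ∂(sphereUniform n))
        = (1 / (n : ℝ)) * (if i = j then 1 else 0)) :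
    S = Sf := by
  have : NeZero n := ⟨by omega⟩
  set f : 𝕊 n → ℝ := fun θ => √(squad Sf θ / squad S θ)
  have hf : Continuous f :=
    ((continuous_squad Sf).div (continuous_squad S) fun θ => (hS.squad_pos θ).ne').sqrt
  have hmoment (i j : Fin n) : ∫ θ, (1 - f θ) * (θ.1 i * θ.1 j) ∂sphereUniform n = 0 := by
    simp only [sub_mul, one_mul]
    rw [integral_sub (Continuous.integrable_of_compactSpace (by fun_prop))
      (Continuous.integrable_of_compactSpace (by fun_prop)), h,
      integral_coord_mul_coord_sphereUniform, sub_self]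
  set g : 𝕊 n → ℝ := fun θ => (1 - f θ) * squad (S - Sf) θ
  have hg : Continuous g := (continuous_const.sub hf).mul (continuous_squad _)
  have hg_integral : ∫ θ, g θ ∂sphereUniform n = 0 := by
    rw [integral_mul_squad (w := fun θ => 1 - f θ) (continuous_const.sub hf)]
    simp [hmoment]
  have hg_nonneg : 0 ≤ g := fun θ => by
    simpa only [g, f, squad_sub, Pi.zero_apply] using
      one_sub_sqrt_div_mul_sub_nonneg (hS.squad_pos θ)
  have hg_zero : g = 0 := (hg.ae_eq_iff_eq _ continuous_const).1
    ((integral_eq_zero_iff_of_nonneg hg_nonneg hg.integrable_of_compactSpace).1 hg_integral)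
  refine sub_eq_zero.1 ((hS.1.sub hSf.1).eq_zero_of_squad_eq_zero fun θ => ?_)
  rw [squad_sub, sub_eq_zero]
  refine eq_of_one_sub_sqrt_div_mul_sub_eq_zero (hS.squad_pos θ) ?_
  simpa only [g, f, squad_sub, Pi.zero_apply] using congrFun hg_zero θ
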